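/- arXiv:2009.06720 — 8 statements merged into one kernel-verified Lean document; each statement's English description precedes it below -/
import Mathlib

section
/- For any graph G with maximum degree Δ and no isolated vertices, there exists a CFON coloring of G using at most Δ + 1 colors; i.e., a coloring c : V(G) → Fin (Δ+1) such that every vertex v has some color appearing exactly once among the neighbors of v. -/
/-!
The argument works for any family of finite sets `E i` in which every point lies in fewer
than `k` of the sets: there is a `k`-coloring in which every nonempty `E i` has a color occurring
exactly once in it. For the theorem, the sets are the open neighbourhoods, and `x ∈ N(v)` for at
most `Δ` vertices `v`.

Color the points one at a time, maintaining for each `E i` that already meets the colored points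
a color occurring exactly once among its colored points. A new point `x` lies in fewer than `k`
sets, so it can avoid the colors recorded for all of them; those colors then stay unique, and a
set whose first colored point is `x` gets the color of `x` as its unique color.
-/

open Finset Function

section ConflictFree

variable {ι V α : Type*}

def IsUniqueColor (c : V → α) (t : Finset V) (a : α) : Prop :=
  ∃! u, u ∈ t ∧ c u = a

section Update

variable [DecidableEq V] {c : V → α} {t : Finset V} {a : α}

theorem IsUniqueColor.insert {x : V} (h : IsUniqueColor c t a) (hx : c x ≠ a) :
    IsUniqueColor c (insert x t) a := by
  obtain ⟨u, hu, huniq⟩ := h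
  refine ⟨u, ⟨mem_insert_of_mem hu.1, hu.2⟩, ?_⟩
  rintro w ⟨hw, rfl⟩
  rcases mem_insert.1 hw with rfl | hw
  · exact absurd rfl hx
  · exact huniq w ⟨hw, rfl⟩

theorem IsUniqueColor.update_of_notMem {x : V} (h : IsUniqueColor c t a) (hx : x ∉ t)
    (b : α) : IsUniqueColor (update c x b) t a := by
  have heq : ∀ u ∈ t, update c x b u = c u := fun u hu =>
    update_of_ne (ne_of_mem_of_not_mem hu hx) _ _
  obtain ⟨u, hu, huniq⟩ := h
  exact ⟨u, ⟨hu.1, heq u hu.1 ▸ hu.2⟩, fun w hw => huniq w ⟨hw.1, heq w hw.1 ▸ hw.2⟩⟩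

theorem isUniqueColor_update_singleton (c : V → α) (x : V) (b : α) :
    IsUniqueColor (update c x b) {x} b :=
  ⟨x, ⟨mem_singleton_self x, update_self x b c⟩, fun _ hw => mem_singleton.1 hw.1⟩

end Update

variable [DecidableEq V]

def IsConflictFreeOn (E : ι → Finset V) (s : Finset V) (c : V → α) : Prop :=
  ∀ i, (E i ∩ s).Nonempty → ∃ a, IsUniqueColor c (E i ∩ s) a

variable [Fintype ι] [Fintype α] {E : ι → Finset V}

theorem IsConflictFreeOn.exists_update_insert
    (hE : ∀ x, #{i | x ∈ E i} < Fintype.card α) {s : Finset V} {c : V → α}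
    (hc : IsConflictFreeOn E s c) {x : V} (hx : x ∉ s) :
    ∃ b, IsConflictFreeOn E (insert x s) (update c x b) := by
  classical
  have : Nonempty α := Fintype.card_pos_iff.1 (hE x).pos
  have hcolor : ∀ i, ∃ a, (E i ∩ s).Nonempty → IsUniqueColor c (E i ∩ s) a := fun i => by
    by_cases h : (E i ∩ s).Nonempty
    · exact (hc i h).imp fun _ ha _ => ha
    · exact ⟨Classical.arbitrary α, (absurd · h)⟩
  choose f hf using hcolor
  obtain ⟨b, -, hb⟩ : ∃ b ∈ (univ : Finset α), b ∉ ({i | x ∈ E i} : Finset ι).image f := by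
    refine exists_mem_notMem_of_card_lt_card ?_
    exact card_image_le.trans_lt ((hE x).trans_eq card_univ.symm)
  refine ⟨b, fun i hi => ?_⟩
  have hxt : x ∉ E i ∩ s := fun h => hx (mem_inter.1 h).2
  by_cases hxi : x ∈ E i
  · rw [inter_insert_of_mem hxi]
    rcases (E i ∩ s).eq_empty_or_nonempty with hempty | hne
    · exact ⟨b, hempty ▸ isUniqueColor_update_singleton c x b⟩
    · have hfb : f i ≠ b := fun h => hb (mem_image.2 ⟨i, by simpa using hxi, h⟩)
      exact ⟨f i, ((hf i hne).update_of_notMem hxt b).insert (by simpa using hfb.symm)⟩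
  · rw [inter_insert_of_notMem hxi] at hi ⊢
    obtain ⟨a, ha⟩ := hc i hi
    exact ⟨a, ha.update_of_notMem hxt b⟩

theorem exists_isConflictFreeOn (hE : ∀ x, #{i | x ∈ E i} < Fintype.card α) (s : Finset V) :
    ∃ c : V → α, IsConflictFreeOn E s c := by
  induction s using Finset.induction_on with
  | empty =>
    exact ⟨fun x => (Fintype.card_pos_iff.1 (hE x).pos).some, fun i h => by simp at h⟩
  | insert x s hx ih =>
    obtain ⟨c, hc⟩ := ih
    obtain ⟨b, hb⟩ := hc.exists_update_insert hE hx
    exact ⟨_, hb⟩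

theorem exists_conflictFree_coloring (hE : ∀ x, #{i | x ∈ E i} < Fintype.card α) :
    ∃ c : V → α, ∀ i, (E i).Nonempty → ∃ a, IsUniqueColor c (E i) a := by
  obtain ⟨c, hc⟩ := exists_isConflictFreeOn hE (univ.biUnion E)
  refine ⟨c, fun i hi => ?_⟩
  have hEi : E i ∩ univ.biUnion E = E i := inter_eq_left.2 (subset_biUnion_of_mem E (mem_univ i))
  simpa only [hEi] using hc i (by rwa [hEi])

end ConflictFree

/-- Any graph with maximum degree `Δ` and no isolated vertices has a CFON coloring
with at most `Δ + 1` colors: every vertex has some color appearing exactly once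
among its neighbors. -/
theorem cfon_of_maxDegree {V : Type*} [Fintype V] [DecidableEq V]
    (G : SimpleGraph V) [DecidableRel G.Adj]
    (hiso : ∀ v : V, 0 < G.degree v) :
    ∃ c : V → Fin (G.maxDegree + 1),
      ∀ v : V, ∃ a : Fin (G.maxDegree + 1), ∃! u : V, G.Adj v u ∧ c u = a := by
  have hE : ∀ x, #{v | x ∈ G.neighborFinset v} < Fintype.card (Fin (G.maxDegree + 1)) := by
    intro x
    have hN : ({v | x ∈ G.neighborFinset v} : Finset V) = G.neighborFinset x := by
      ext v
      simp [G.adj_comm]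
    rw [hN, Fintype.card_fin, G.card_neighborFinset_eq_degree]
    exact Nat.lt_succ_of_le (G.degree_le_maxDegree x)
  obtain ⟨c, hc⟩ := exists_conflictFree_coloring hE
  refine ⟨c, fun v => ?_⟩
  obtain ⟨a, ha⟩ := hc v (card_pos.1 (hiso v))
  exact ⟨a, by simpa only [IsUniqueColor, SimpleGraph.mem_neighborFinset] using ha⟩
end

section
/- Let H be a hypergraph (a set of nonempty hyperedges over a vertex set V) in which every vertex belongs to at most Δ hyperedges. Then H admits a conflict-free coloring with at most Δ + 1 colors: there is c : V → Fin (Δ+1) such that every hyperedge e contains a vertex whose color differs from the color of every other vertex of e. -/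
/-- A hypergraph with nonempty hyperedges in which every vertex lies in at most `Δ`
hyperedges has a conflict-free coloring with `Δ + 1` colors. -/
theorem hypergraph_cf_of_degree {V : Type*} [Fintype V] [DecidableEq V]
    (Δ : ℕ) (E : Finset (Finset V))
    (hne : ∀ e ∈ E, e.Nonempty)
    (hdeg : ∀ v : V, (E.filter (fun e => v ∈ e)).card ≤ Δ) :
    ∃ c : V → Fin (Δ + 1),
      ∀ e ∈ E, ∃ x ∈ e, ∀ y ∈ e, y ≠ x → c y ≠ c x := by
  induction Δ generalizing E with
  | zero =>
    refine ⟨fun _ => 0, fun e he => ?_⟩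
    obtain ⟨v, hv⟩ := hne e he
    have h1 : e ∈ E.filter (fun e => v ∈ e) := Finset.mem_filter.2 ⟨he, hv⟩
    have := Finset.card_pos.2 ⟨e, h1⟩
    exact absurd (hdeg v) (Nat.not_le.2 this)
  | succ d IH =>
    classical
    -- candidates: transversals of E
    set cands : Finset (Finset V) :=
      Finset.univ.powerset.filter (fun S => ∀ e ∈ E, (e ∩ S).Nonempty) with hcands
    have hunivmem : (Finset.univ : Finset V) ∈ cands := by
      refine Finset.mem_filter.2 ⟨Finset.mem_powerset.2 (le_refl _), fun e he => ?_⟩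
      rw [Finset.inter_univ]; exact hne e he
    obtain ⟨R, hRmem, hRmin⟩ := Finset.exists_min_image cands Finset.card ⟨_, hunivmem⟩
    have hRtrans : ∀ e ∈ E, (e ∩ R).Nonempty := (Finset.mem_filter.1 hRmem).2
    -- every vertex of R has a private edge
    have hpriv : ∀ v ∈ R, ∃ e ∈ E, e ∩ R = {v} := by
      intro v hv
      by_contra hno
      push_neg at hno
      have herase : R.erase v ∈ cands := by
        refine Finset.mem_filter.2 ⟨Finset.mem_powerset.2 (Finset.subset_univ _), fun e he => ?_⟩
        obtain ⟨w, hw⟩ := hRtrans e he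
        have hne' : e ∩ R ≠ {v} := hno e he
        have : ∃ u ∈ e ∩ R, u ≠ v := by
          by_contra hall
          push_neg at hall
          apply hne'
          apply Finset.Subset.antisymm
          · intro u hu; exact Finset.mem_singleton.2 (hall u hu)
          · intro u hu
            rw [Finset.mem_singleton] at hu
            subst hu
            obtain hww := hall w hw
            subst hww; exact hw
        obtain ⟨u, hu, huv⟩ := this
        exact ⟨u, by
          rw [Finset.mem_inter] at hu ⊢
          exact ⟨hu.1, Finset.mem_erase.2 ⟨huv, hu.2⟩⟩⟩
      have := hRmin _ herase
      have hlt : (R.erase v).card < R.card := Finset.card_erase_lt_of_mem hv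
      omega
    -- edges meeting R in at least two points, restricted to R
    set E' : Finset (Finset V) := E.filter (fun e => 2 ≤ (e ∩ R).card) with hE'
    set E'' : Finset (Finset V) := E'.image (fun e => e ∩ R) with hE''
    have hne'' : ∀ f ∈ E'', f.Nonempty := by
      intro f hf
      obtain ⟨e, he, rfl⟩ := Finset.mem_image.1 hf
      exact hRtrans e (Finset.mem_filter.1 he).1
    have hdeg'' : ∀ v : V, (E''.filter (fun f => v ∈ f)).card ≤ d := by
      intro v
      by_cases hvR : v ∈ R
      · obtain ⟨ev, hev, hevR⟩ := hpriv v hvR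
        have hsub : E''.filter (fun f => v ∈ f) ⊆
            (E'.filter (fun e => v ∈ e)).image (fun e => e ∩ R) := by
          intro f hf
          rw [Finset.mem_filter] at hf
          obtain ⟨e, he, rfl⟩ := Finset.mem_image.1 hf.1
          have hv := hf.2
          exact Finset.mem_image.2 ⟨e, Finset.mem_filter.2
            ⟨he, (Finset.mem_inter.1 hv).1⟩, rfl⟩
        have h1 : (E''.filter (fun f => v ∈ f)).card ≤ (E'.filter (fun e => v ∈ e)).card :=
          le_trans (Finset.card_le_card hsub) (Finset.card_image_le)
        have hsub2 : E'.filter (fun e => v ∈ e) ⊆ (E.filter (fun e => v ∈ e)).erase ev := by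
          intro e he
          rw [Finset.mem_filter] at he
          obtain ⟨he', hv⟩ := he
          rw [hE', Finset.mem_filter] at he'
          refine Finset.mem_erase.2 ⟨?_, Finset.mem_filter.2 ⟨he'.1, hv⟩⟩
          intro h
          subst h
          rw [hevR, Finset.card_singleton] at he'
          omega
        have hvev : v ∈ ev := by
          have : v ∈ ev ∩ R := by rw [hevR]; exact Finset.mem_singleton_self v
          exact (Finset.mem_inter.1 this).1
        have hmem : ev ∈ E.filter (fun e => v ∈ e) := Finset.mem_filter.2 ⟨hev, hvev⟩
        have h2 : ((E.filter (fun e => v ∈ e)).erase ev).card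
            = (E.filter (fun e => v ∈ e)).card - 1 := Finset.card_erase_of_mem hmem
        have h3 := hdeg v
        have h4 := Finset.card_le_card hsub2
        omega
      · have : E''.filter (fun f => v ∈ f) = ∅ := by
          rw [Finset.filter_eq_empty_iff]
          intro f hf
          obtain ⟨e, he, rfl⟩ := Finset.mem_image.1 hf
          intro hv
          exact hvR (Finset.mem_inter.1 hv).2
        rw [this]
        simp
    obtain ⟨c', hc'⟩ := IH E'' hne'' hdeg''
    refine ⟨fun v => if v ∈ R then (c' v).succ else 0, fun e he => ?_⟩
    by_cases h2 : 2 ≤ (e ∩ R).card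
    · have hmem'' : e ∩ R ∈ E'' :=
        Finset.mem_image.2 ⟨e, Finset.mem_filter.2 ⟨he, h2⟩, rfl⟩
      obtain ⟨x, hx, hux⟩ := hc' _ hmem''
      obtain ⟨hxe, hxR⟩ := Finset.mem_inter.1 hx
      refine ⟨x, hxe, fun y hy hyx => ?_⟩
      by_cases hyR : y ∈ R
      · simp only [if_pos hyR, if_pos hxR]
        intro hcon
        exact hux y (Finset.mem_inter.2 ⟨hy, hyR⟩) hyx (Fin.succ_inj.1 hcon)
      · simp only [if_neg hyR, if_pos hxR]
        exact (Fin.succ_ne_zero _).symm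
    · obtain ⟨w, hw⟩ := hRtrans e he
      have hcard1 : (e ∩ R).card = 1 := by
        have := Finset.card_pos.2 ⟨w, hw⟩
        omega
      obtain ⟨u, hu⟩ := Finset.card_eq_one.1 hcard1
      have hue : u ∈ e ∧ u ∈ R := by
        have : u ∈ e ∩ R := by rw [hu]; exact Finset.mem_singleton_self u
        exact Finset.mem_inter.1 this
      refine ⟨u, hue.1, fun y hy hyu => ?_⟩
      have hyR : y ∉ R := by
        intro hyR
        have : y ∈ e ∩ R := Finset.mem_inter.2 ⟨hy, hyR⟩
        rw [hu, Finset.mem_singleton] at this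
        exact hyu this
      simp only [if_neg hyR, if_pos hue.2]
      exact (Fin.succ_ne_zero _).symm
end

section
/- Let G be an S_k-free graph (no induced star K_{1,k}) with no isolated vertices, and let A be an independent set in G with B = V(G) \ A. Then there is a coloring of B using at most k colors such that every vertex of A has some color appearing exactly once among its neighbors in B. -/
/-!
Every vertex of `B` has fewer than `k` neighbours in `A`: they are pairwise non-adjacent, so `k` of
them would span an induced `S_k`. Hence the neighbourhoods of the vertices of `A` form a hypergraph
on `B` with nonempty edges and maximum degree at most `k - 1`, and such a hypergraph has a
conflict-free colouring with `k` colours. For the latter, give colour `0` to a maximal set `I`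
meeting every edge at most once. Edges meeting `I` exactly once are served by colour `0`; the other
edges avoid `I`, and by maximality each of their vertices also lies in a served edge, so the
unserved edges form a hypergraph of smaller maximum degree, coloured inductively with the
remaining colours.
-/

open Finset

section ConflictFree

variable {ι β : Type*} [DecidableEq β]

def IsConflictFreeColoring {γ : Type*} (E : ι → Finset β) (U : Finset ι) (c : β → γ) : Prop :=
  ∀ i ∈ U, ∃ col, ∃! b, b ∈ E i ∧ c b = col

lemma exists_maximal_strongly_independent (E : ι → Finset β) (U : Finset ι) :
    ∃ I : Finset β, (∀ i ∈ U, #(E i ∩ I) ≤ 1) ∧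
      ∀ i ∈ U, ∀ b ∈ E i, b ∉ I → ∃ j ∈ U, b ∈ E j ∧ #(E j ∩ I) = 1 := by
  obtain ⟨I, hI⟩ := ((U.biUnion E).powerset.filter
    fun I => ∀ i ∈ U, #(E i ∩ I) ≤ 1).exists_maximal ⟨∅, by simp⟩
  simp only [mem_filter, mem_powerset] at hI
  refine ⟨I, hI.1.2, fun i hi b hb hbI => ?_⟩
  have hbU : b ∈ U.biUnion E := mem_biUnion.2 ⟨i, hi, hb⟩
  have hnot : ¬ ∀ j ∈ U, #(E j ∩ insert b I) ≤ 1 := fun h =>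
    hbI (hI.2 ⟨insert_subset hbU hI.1.1, h⟩ (subset_insert b I) (mem_insert_self b I))
  obtain ⟨j, hj, hcard⟩ : ∃ j ∈ U, 1 < #(E j ∩ insert b I) := by simpa using hnot
  have hbj : b ∈ E j := by
    by_contra hbj
    rw [inter_insert_of_notMem hbj] at hcard
    exact absurd (hI.1.2 j hj) hcard.not_ge
  rw [inter_insert_of_mem hbj, card_insert_of_notMem (fun h => hbI (mem_inter.1 h).2)] at hcard
  exact ⟨j, hj, hbj, le_antisymm (hI.1.2 j hj) (by omega)⟩

lemma card_filter_unserved_lt {E : ι → Finset β} {U : Finset ι} {I : Finset β}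
    (hI : ∀ i ∈ U, #(E i ∩ I) ≤ 1)
    (hImax : ∀ i ∈ U, ∀ b ∈ E i, b ∉ I → ∃ j ∈ U, b ∈ E j ∧ #(E j ∩ I) = 1) {i : ι} {b : β}
    (hi : i ∈ U.filter fun i => #(E i ∩ I) ≠ 1) (hb : b ∈ E i) :
    #{j ∈ U.filter fun j => #(E j ∩ I) ≠ 1 | b ∈ E j} < #{j ∈ U | b ∈ E j} := by
  obtain ⟨hiU, hiI⟩ := mem_filter.1 hi
  have hbI : b ∉ I := fun hbI => hiI (le_antisymm (hI i hiU) (card_pos.2 ⟨b, mem_inter.2 ⟨hb, hbI⟩⟩))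
  obtain ⟨j, hj, hbj, hjI⟩ := hImax i hiU b hb hbI
  refine card_lt_card ((ssubset_iff_of_subset fun j' hj' => ?_).2
    ⟨j, mem_filter.2 ⟨hj, hbj⟩, fun hj' => (mem_filter.1 (mem_filter.1 hj').1).2 hjI⟩)
  simp only [mem_filter] at hj' ⊢
  exact ⟨hj'.1.1, hj'.2⟩

theorem exists_isConflictFreeColoring (E : ι → Finset β) (k : ℕ) (U : Finset ι)
    (hE : ∀ i ∈ U, (E i).Nonempty) (hdeg : ∀ b, #{i ∈ U | b ∈ E i} ≤ k) :
    ∃ c : β → Fin (k + 1), IsConflictFreeColoring E U c := by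
  induction k generalizing U with
  | zero =>
    refine ⟨0, fun i hi => ?_⟩
    obtain ⟨b, hb⟩ := hE i hi
    exact (filter_eq_empty_iff.1 (card_eq_zero.1 (Nat.le_zero.1 (hdeg b))) hi hb).elim
  | succ k ih =>
    obtain ⟨I, hI, hImax⟩ := exists_maximal_strongly_independent E U
    set U' := U.filter fun i => #(E i ∩ I) ≠ 1
    have hdeg' (b : β) : #{i ∈ U' | b ∈ E i} ≤ k := by
      obtain hempty | ⟨i, hi⟩ := ({i ∈ U' | b ∈ E i}).eq_empty_or_nonempty
      · simp [hempty]
      obtain ⟨hiU', hb⟩ := mem_filter.1 hi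
      exact Nat.le_of_lt_succ ((card_filter_unserved_lt hI hImax hiU' hb).trans_le (hdeg b))
    obtain ⟨c', hc'⟩ := ih U' (fun i hi => hE i (mem_filter.1 hi).1) hdeg'
    set c : β → Fin (k + 2) := fun b => if b ∈ I then 0 else (c' b).succ
    have hc0 (b : β) : c b = 0 ↔ b ∈ I := by
      by_cases hb : b ∈ I <;> simp [c, hb, Fin.succ_ne_zero]
    have hcsucc (b : β) (hb : b ∉ I) : c b = (c' b).succ := if_neg hb
    refine ⟨c, fun i hi => ?_⟩
    by_cases hiI : #(E i ∩ I) = 1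
    · obtain ⟨b₀, hb₀⟩ := card_eq_one.1 hiI
      refine ⟨0, ?_⟩
      simp_rw [hc0, ← mem_inter, hb₀, mem_singleton]
      exact existsUnique_eq
    · obtain ⟨col, hcol⟩ := hc' i (mem_filter.2 ⟨hi, hiI⟩)
      refine ⟨col.succ, (existsUnique_congr fun b => and_congr_right fun hb => ?_).2 hcol⟩
      have hbI : b ∉ I := fun hbI =>
        hiI (le_antisymm (hI i hi) (card_pos.2 ⟨b, mem_inter.2 ⟨hb, hbI⟩⟩))
      rw [hcsucc b hbI, Fin.succ_inj]

end ConflictFree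

lemma card_filter_adj_lt_of_not_exists_star {V : Type*} (G : SimpleGraph V) [DecidableRel G.Adj]
    (k : ℕ) (hSk : ¬ ∃ (b : V) (S : Finset V), S.card = k ∧ b ∉ S ∧
      (∀ a ∈ S, G.Adj b a) ∧ (∀ a ∈ S, ∀ a' ∈ S, a ≠ a' → ¬ G.Adj a a'))
    (A : Finset V) (hA : ∀ a ∈ A, ∀ a' ∈ A, ¬ G.Adj a a') (b : V) :
    #{a ∈ A | G.Adj b a} < k := by
  by_contra! hk
  obtain ⟨S, hSA, hS⟩ := exists_subset_card_eq hk
  refine hSk ⟨b, S, hS, fun hb => G.irrefl (mem_filter.1 (hSA hb)).2,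
    fun a ha => (mem_filter.1 (hSA ha)).2, fun a ha a' ha' _ => ?_⟩
  exact hA a (mem_filter.1 (hSA ha)).1 a' (mem_filter.1 (hSA ha')).1

theorem cf_coloring_outside_independent_set_general {V : Type*} [Fintype V]
    (G : SimpleGraph V) [DecidableRel G.Adj] (k : ℕ)
    (hSk : ¬ ∃ (b : V) (S : Finset V), S.card = k ∧ b ∉ S ∧
      (∀ a ∈ S, G.Adj b a) ∧ (∀ a ∈ S, ∀ a' ∈ S, a ≠ a' → ¬ G.Adj a a'))
    (hiso : ∀ v : V, 0 < G.degree v)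
    (A : Finset V)
    (hA : ∀ a ∈ A, ∀ a' ∈ A, ¬ G.Adj a a') :
    ∃ c : V → Fin k,
      ∀ a ∈ A, ∃ col : Fin k, ∃! b : V, b ∉ A ∧ G.Adj a b ∧ c b = col := by
  classical
  obtain _ | k := k
  · have : IsEmpty V := ⟨fun v => hSk ⟨v, ∅, by simp⟩⟩
    exact ⟨fun v => (IsEmpty.false v).elim, fun a => (IsEmpty.false a).elim⟩
  have hdeg (b : V) : #{a ∈ A | b ∈ G.neighborFinset a} ≤ k := by
    simp_rw [SimpleGraph.mem_neighborFinset, G.adj_comm _ b]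
    exact Nat.lt_succ_iff.1 (card_filter_adj_lt_of_not_exists_star G _ hSk A hA b)
  obtain ⟨c, hc⟩ := exists_isConflictFreeColoring (fun a => G.neighborFinset a) k A
    (fun a _ => card_pos.1 (by rw [G.card_neighborFinset_eq_degree]; exact hiso a)) hdeg
  refine ⟨c, fun a ha => (hc a ha).imp fun col => (existsUnique_congr fun b => ?_).1⟩
  rw [SimpleGraph.mem_neighborFinset]
  exact (and_iff_right_of_imp fun h hb => hA a ha b hb h.1).symm

/-- If `G` is `S_k`-free (no induced star `K_{1,k}`) with no isolated vertices and
`A` is an independent set, then `B = V \ A` can be colored with `k` colors so that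
every vertex of `A` has some color appearing exactly once among its neighbors (which
all lie in `B`). -/
theorem cf_coloring_outside_independent_set {V : Type*} [Fintype V] [DecidableEq V]
    (G : SimpleGraph V) [DecidableRel G.Adj] (k : ℕ)
    (hSk : ¬ ∃ (b : V) (S : Finset V), S.card = k ∧ b ∉ S ∧
      (∀ a ∈ S, G.Adj b a) ∧ (∀ a ∈ S, ∀ a' ∈ S, a ≠ a' → ¬ G.Adj a a'))
    (hiso : ∀ v : V, 0 < G.degree v)
    (A : Finset V)
    (hA : ∀ a ∈ A, ∀ a' ∈ A, ¬ G.Adj a a') :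
    ∃ c : V → Fin k,
      ∀ a ∈ A, ∃ col : Fin k, ∃! b : V, b ∉ A ∧ G.Adj a b ∧ c b = col :=
  cf_coloring_outside_independent_set_general G k hSk hiso A hA
end

section
/- Let m ≥ 2 and let c be an edge coloring of the complete graph K_m with k colors such that for every edge e = {u,v}, some edge sharing exactly one endpoint with e receives a color assigned to no other edge incident to u or v (other than possibly e itself). Then k ≥ log₂ m. -/
private def gfun (m k : ℕ) (c : Sym2 (Fin m) → Fin k) (v : Fin m) (i : Fin k) : Bool :=
  decide ((Finset.univ.filter (fun w => w ≠ v ∧ c s(v, w) = i)).card = 1)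

private lemma key {m k : ℕ} (c : Sym2 (Fin m) → Fin k) (u v w : Fin m)
    (huv : u ≠ v) (hwu : w ≠ u) (hwv : w ≠ v)
    (huniq : ∀ f' : Sym2 (Fin m), ¬ f'.IsDiag → f' ≠ s(u, v) →
      (∃ x, x ∈ s(u, v) ∧ x ∈ f') → f' ≠ s(u, w) → c f' ≠ c s(u, w)) :
    gfun m k c u (c s(u, w)) ≠ gfun m k c v (c s(u, w)) := by
  set i := c s(u, w) with hi
  have hmu : ∀ w' : Fin m, (w' ≠ u ∧ c s(u, w') = i) ↔ (w' = w ∨ (w' = v ∧ c s(u, v) = i)) := by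
    intro w'
    constructor
    · rintro ⟨h1, h2⟩
      by_cases hww : w' = w
      · exact Or.inl hww
      by_cases hwv' : w' = v
      · exact Or.inr ⟨hwv', by rw [← hwv']; exact h2⟩
      exfalso
      refine huniq s(u, w') ?_ ?_ ⟨u, by simp, by simp⟩ ?_ h2
      · rw [Sym2.mk_isDiag_iff]; exact fun h => h1 h.symm
      · intro hh
        rcases Sym2.eq_iff.mp hh with ⟨_, h⟩ | ⟨h, _⟩
        exacts [hwv' h, huv h]
      · intro hh
        rcases Sym2.eq_iff.mp hh with ⟨_, h⟩ | ⟨h, _⟩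
        exacts [hww h, hwu h.symm]
    · rintro (rfl | ⟨rfl, h2⟩)
      · exact ⟨hwu, rfl⟩
      · exact ⟨huv.symm, h2⟩
  have hmv : ∀ w' : Fin m, (w' ≠ v ∧ c s(v, w') = i) ↔ (w' = u ∧ c s(u, v) = i) := by
    intro w'
    constructor
    · rintro ⟨h1, h2⟩
      by_cases hwu' : w' = u
      · subst hwu'
        exact ⟨rfl, by rwa [Sym2.eq_swap] at h2⟩
      exfalso
      refine huniq s(v, w') ?_ ?_ ⟨v, by simp, by simp⟩ ?_ h2
      · rw [Sym2.mk_isDiag_iff]; exact fun h => h1 h.symm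
      · intro hh
        rcases Sym2.eq_iff.mp hh with ⟨h, _⟩ | ⟨_, h⟩
        exacts [huv h.symm, hwu' h]
      · intro hh
        rcases Sym2.eq_iff.mp hh with ⟨h, _⟩ | ⟨h, _⟩
        exacts [huv h.symm, hwv h.symm]
    · rintro ⟨rfl, h2⟩
      exact ⟨huv, by rwa [Sym2.eq_swap]⟩
  by_cases hce : c s(u, v) = i
  · have hSu : (Finset.univ.filter (fun w' => w' ≠ u ∧ c s(u, w') = i)) = {w, v} := by
      ext w'; simp [hmu w', hce]
    have hSv : (Finset.univ.filter (fun w' => w' ≠ v ∧ c s(v, w') = i)) = {u} := by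
      ext w'; simp [hmv w', hce]
    simp [gfun, hSu, hSv, Finset.card_pair hwv]
  · have hSu : (Finset.univ.filter (fun w' => w' ≠ u ∧ c s(u, w') = i)) = {w} := by
      ext w'; simp [hmu w', hce]
    have hSv : (Finset.univ.filter (fun w' => w' ≠ v ∧ c s(v, w') = i)) = ∅ := by
      ext w'; simp [hmv w', hce]
    simp [gfun, hSu, hSv]

/-- Any CFON coloring of the line graph of `K_m` (viewed as an edge coloring of `K_m`
in which every edge has an adjacent edge whose color appears on no other edge incident
to either of its endpoints) uses at least `log₂ m` colors. -/
theorem cfon_line_graph_complete_lower_bound (m k : ℕ) (hm : 2 ≤ m)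
    (c : Sym2 (Fin m) → Fin k)
    (hCF : ∀ e : Sym2 (Fin m), ¬ e.IsDiag →
      ∃ f : Sym2 (Fin m), ¬ f.IsDiag ∧ f ≠ e ∧ (∃ x, x ∈ e ∧ x ∈ f) ∧
        ∀ f' : Sym2 (Fin m), ¬ f'.IsDiag → f' ≠ e → (∃ x, x ∈ e ∧ x ∈ f') →
          f' ≠ f → c f' ≠ c f) :
    Real.logb 2 m ≤ k := by
  have hg : Function.Injective (gfun m k c) := by
    intro u v h
    by_contra huv
    obtain ⟨f, hfd, hfe, ⟨x, hxe, hxf⟩, huniq⟩ := hCF s(u, v) (by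
      rw [Sym2.mk_isDiag_iff]; exact huv)
    have hw : s(x, Sym2.Mem.other hxf) = f := Sym2.other_spec hxf
    set w := Sym2.Mem.other hxf with hwdef
    have hwx : w ≠ x := Sym2.other_ne hfd hxf
    rcases Sym2.mem_iff.mp hxe with rfl | rfl
    · -- x = u
      have hwv : w ≠ v := by
        intro hh
        apply hfe
        rw [← hw, hh]
      have := key c x v w huv hwx hwv (by
        intro f' h1 h2 h3 h4
        rw [hw]
        exact huniq f' h1 h2 h3 (by rwa [hw] at h4))
      exact this (congrFun h (c s(x, w)))
    · -- x = v
      have hwu : w ≠ u := by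
        intro hh
        apply hfe
        rw [← hw, hh, Sym2.eq_swap]
      have := key c x u w (fun hh => huv hh.symm) hwx hwu (by
        intro f' h1 h2 h3 h4
        rw [hw]
        refine huniq f' h1 ?_ ?_ (by rwa [hw] at h4)
        · rwa [Sym2.eq_swap] at h2
        · rwa [Sym2.eq_swap] at h3)
      exact this (congrFun h.symm (c s(x, w)))
  have hcard : m ≤ 2 ^ k := by
    have := Fintype.card_le_of_injective _ hg
    simpa using this
  have h1 : (m : ℝ) ≤ 2 ^ k := by exact_mod_cast hcard
  have h2 : Real.logb 2 (m : ℝ) ≤ Real.logb 2 ((2 : ℝ) ^ k) :=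
    Real.logb_le_logb_of_le one_lt_two (by positivity) h1
  calc Real.logb 2 m ≤ Real.logb 2 ((2 : ℝ) ^ k) := h2
    _ = k := by rw [Real.logb_pow]; simp [Real.logb_self_eq_one]
end

section
/- Fix an edge coloring c of K_m with colors {1,…,k}. For each vertex v define g(v) ∈ {0,1}^k by g_i(v) = 1 iff exactly one edge incident to v has color i. If c is a CFON coloring of the line graph of K_m (every edge has a uniquely colored adjacent edge), then the map g is injective on V(K_m). -/
/-!
Let `u ≠ v` and let `s(v, y)` be the edge adjacent to `s(u, v)` whose colour `i` appears on no
other edge adjacent to `s(u, v)`. At `u` the only possible edge of colour `i` is `s(u, v)`, while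
at `v` the edges of colour `i` are `s(v, y)` and possibly `s(u, v)`. So `v` has one more edge of
colour `i` than `u`, and exactly one of the two counts equals `1`.
-/

open Finset

variable {V κ : Type*} [Fintype V] [DecidableEq V] [DecidableEq κ]

def colorNeighbors (c : Sym2 V → κ) (v : V) (i : κ) : Finset V :=
  {w | w ≠ v ∧ c s(v, w) = i}

@[simp]
theorem mem_colorNeighbors {c : Sym2 V → κ} {v w : V} {i : κ} :
    w ∈ colorNeighbors c v i ↔ w ≠ v ∧ c s(v, w) = i := by
  simp [colorNeighbors]

theorem card_colorNeighbors_eq_one_ne {c : Sym2 V → κ} {u v y : V}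
    (huv : u ≠ v) (hyu : y ≠ u) (hyv : y ≠ v)
    (hu : ∀ w, w ≠ u → w ≠ v → c s(u, w) ≠ c s(v, y))
    (hv : ∀ w, w ≠ v → w ≠ u → w ≠ y → c s(v, w) ≠ c s(v, y)) :
    (#(colorNeighbors c u (c s(v, y))) = 1) ≠ (#(colorNeighbors c v (c s(v, y))) = 1) := by
  by_cases huvy : c s(u, v) = c s(v, y)
  · have hcu : colorNeighbors c u (c s(v, y)) = {v} := by
      ext w; simp only [mem_colorNeighbors, mem_singleton]; grind
    have hcv : colorNeighbors c v (c s(v, y)) = {u, y} := by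
      ext w; simp only [mem_colorNeighbors, mem_insert, mem_singleton]; grind [Sym2.eq_swap]
    simp [hcu, hcv, card_pair hyu.symm]
  · have hcu : colorNeighbors c u (c s(v, y)) = ∅ := by
      ext w; simp only [mem_colorNeighbors, notMem_empty, iff_false]; grind
    have hcv : colorNeighbors c v (c s(v, y)) = {y} := by
      ext w; simp only [mem_colorNeighbors, mem_singleton]; grind [Sym2.eq_swap]
    simp [hcu, hcv]

theorem card_colorNeighbors_eq_one_ne_of_uniquely_colored {c : Sym2 V → κ} {u v y : V}
    (huv : u ≠ v) (hvy : ¬ s(v, y).IsDiag) (hne : s(v, y) ≠ s(u, v))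
    (huniq : ∀ f : Sym2 V, ¬ f.IsDiag → f ≠ s(u, v) → (∃ x, x ∈ s(u, v) ∧ x ∈ f) →
      f ≠ s(v, y) → c f ≠ c s(v, y)) :
    (#(colorNeighbors c u (c s(v, y))) = 1) ≠ (#(colorNeighbors c v (c s(v, y))) = 1) := by
  have hyv : y ≠ v := by simpa [eq_comm] using hvy
  have hyu : y ≠ u := by rintro rfl; exact hne Sym2.eq_swap
  refine card_colorNeighbors_eq_one_ne huv hyu hyv (fun w hwu hwv => huniq _ ?_ ?_ ?_ ?_)
    (fun w hwv hwu hwy => huniq _ ?_ ?_ ?_ ?_)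
  all_goals simp <;> grind

theorem fingerprint_injective_general (m k : ℕ)
    (c : Sym2 (Fin m) → Fin k)
    (hCF : ∀ e : Sym2 (Fin m), ¬ e.IsDiag →
      ∃ f : Sym2 (Fin m), ¬ f.IsDiag ∧ f ≠ e ∧ (∃ x, x ∈ e ∧ x ∈ f) ∧
        ∀ f' : Sym2 (Fin m), ¬ f'.IsDiag → f' ≠ e → (∃ x, x ∈ e ∧ x ∈ f') →
          f' ≠ f → c f' ≠ c f) :
    Function.Injective (fun v : Fin m => fun i : Fin k =>
      (Finset.univ.filter (fun w : Fin m => w ≠ v ∧ c s(v, w) = i)).card = 1) := by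
  intro u v h
  by_contra huv
  obtain ⟨f, hfd, hfe, ⟨x, hxe, hxf⟩, huniq⟩ := hCF s(u, v) (Sym2.mk_isDiag_iff.not.mpr huv)
  obtain ⟨y, rfl⟩ := Sym2.mem_iff_exists.mp hxf
  have hcount := congrFun h (c s(x, y))
  rcases Sym2.mem_iff.mp hxe with rfl | rfl
  · rw [Sym2.eq_swap (a := x) (b := v)] at hfe huniq
    exact card_colorNeighbors_eq_one_ne_of_uniquely_colored (Ne.symm huv) hfd hfe huniq hcount.symm
  · exact card_colorNeighbors_eq_one_ne_of_uniquely_colored huv hfd hfe huniq hcount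

/-- If `c` is a CFON coloring of the line graph of `K_m`, then the map sending each
vertex `v` to the vector recording which colors appear exactly once among the edges
incident to `v` is injective. -/
theorem fingerprint_injective (m k : ℕ) (hm : 2 ≤ m)
    (c : Sym2 (Fin m) → Fin k)
    (hCF : ∀ e : Sym2 (Fin m), ¬ e.IsDiag →
      ∃ f : Sym2 (Fin m), ¬ f.IsDiag ∧ f ≠ e ∧ (∃ x, x ∈ e ∧ x ∈ f) ∧
        ∀ f' : Sym2 (Fin m), ¬ f'.IsDiag → f' ≠ e → (∃ x, x ∈ e ∧ x ∈ f') →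
          f' ≠ f → c f' ≠ c f) :
    Function.Injective (fun v : Fin m => fun i : Fin k =>
      (Finset.univ.filter (fun w : Fin m => w ≠ v ∧ c s(v, w) = i)).card = 1) :=
  fingerprint_injective_general m k c hCF
end

section
/- For every positive integer N there exists a claw-free graph G on n ≥ N vertices with no isolated vertices such that every CFON coloring of G uses at least log₂((1 + √(1+8n))/2) colors; in particular, the CFON chromatic number of claw-free graphs is Ω(log n). -/
/-!
The witnesses are the line graphs `L(K_m)`, `m ≥ 3`, with `n = m(m-1)/2` vertices, so that
`(1 + √(1 + 8n))/2 = m`. Line graphs are claw-free because the three neighbours of an edge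
`xy` each contain `x` or `y`, so two of them share a vertex. Given a CFON colouring `c` of
`L(G)` with `k` colours, assign to each vertex `v` of `G` the vector in `(ZMod 2)^k` of the
parities of the numbers of edges at `v` of each colour. For an edge `ij` with uniquely
occurring colour `a` in its neighbourhood, the `a`-entries at `i` and `j` add up to `1`, so
the vectors at `i` and `j` differ: this is a proper colouring of `G` with `2^k` colours, and
for `G = K_m` it forces `m ≤ 2^k`.
-/

theorem Sym2.eq_or_eq_or_eq_of_mem {V : Type*} {z : Sym2 V} {v₁ v₂ v₃ : V}
    (h₁ : v₁ ∈ z) (h₂ : v₂ ∈ z) (h₃ : v₃ ∈ z) : v₁ = v₂ ∨ v₁ = v₃ ∨ v₂ = v₃ := by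
  induction z using Sym2.ind with
  | h x y =>
    rw [Sym2.mem_iff] at h₁ h₂ h₃
    rcases h₁ with rfl | rfl <;> rcases h₂ with rfl | rfl <;> rcases h₃ with rfl | rfl <;> simp

namespace SimpleGraph

variable {V W α : Type*} {G : SimpleGraph V} {H : SimpleGraph W}

variable (G) in
def IsClawFree : Prop :=
  ¬ ∃ (b : V) (S : Finset V), S.card = 3 ∧ b ∉ S ∧
    (∀ a ∈ S, G.Adj b a) ∧ (∀ a ∈ S, ∀ a' ∈ S, a ≠ a' → ¬ G.Adj a a')

variable (G) in
def IsCFONColoring (c : V → α) : Prop :=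
  ∀ v, ∃ a, ∃! u, G.Adj v u ∧ c u = a

theorem isClawFree_of_adj_of_adj_of_adj
    (h : ∀ b s₁ s₂ s₃ : V, s₁ ≠ s₂ → s₁ ≠ s₃ → s₂ ≠ s₃ →
      G.Adj b s₁ → G.Adj b s₂ → G.Adj b s₃ → G.Adj s₁ s₂ ∨ G.Adj s₁ s₃ ∨ G.Adj s₂ s₃) :
    G.IsClawFree := by
  classical
  rintro ⟨b, S, hS, -, hbS, hS_indep⟩
  obtain ⟨x, y, z, hxy, hxz, hyz, rfl⟩ := Finset.card_eq_three.mp hS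
  simp only [Finset.mem_insert, Finset.mem_singleton] at hbS hS_indep
  rcases h b x y z hxy hxz hyz (hbS x (by simp)) (hbS y (by simp)) (hbS z (by simp))
    with h | h | h
  · exact hS_indep x (by simp) y (by simp) hxy h
  · exact hS_indep x (by simp) z (by simp) hxz h
  · exact hS_indep y (by simp) z (by simp) hyz h

theorem Iso.isClawFree (e : G ≃g H) (hG : G.IsClawFree) : H.IsClawFree := by
  rintro ⟨b, S, hS, hbS, hadj, hS_indep⟩
  refine hG ⟨e.symm b, S.map e.toEquiv.symm.toEmbedding, by simpa using hS, ?_, ?_, ?_⟩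
  · simpa [Equiv.symm_apply_eq] using hbS
  · intro a ha
    rw [Finset.mem_map_equiv] at ha
    simpa using e.map_adj_iff.mp (by simpa using hadj _ ha)
  · intro a ha a' ha' hne
    rw [Finset.mem_map_equiv] at ha ha'
    rw [← e.map_adj_iff.not]
    exact hS_indep _ ha _ ha' (by simpa using hne)

theorem IsCFONColoring.comp_iso {c : W → α} (hc : H.IsCFONColoring c) (e : G ≃g H) :
    G.IsCFONColoring (c ∘ e) := by
  intro v
  obtain ⟨a, ha⟩ := hc (e v)
  exact ⟨a, by simpa [e.map_adj_iff] using e.toEquiv.symm.existsUnique_congr_left.mp ha⟩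

theorem lineGraph_adj_of_mem_of_mem {e e' : G.edgeSet} {v : V} (hne : e ≠ e')
    (he : v ∈ (e : Sym2 V)) (he' : v ∈ (e' : Sym2 V)) : G.lineGraph.Adj e e' :=
  lineGraph_adj_iff_exists.mpr ⟨hne, v, he, he'⟩

theorem lineGraph_isClawFree : G.lineGraph.IsClawFree := by
  refine isClawFree_of_adj_of_adj_of_adj fun b s₁ s₂ s₃ h₁₂ h₁₃ h₂₃ hb₁ hb₂ hb₃ => ?_
  obtain ⟨-, v₁, hv₁b, hv₁⟩ := lineGraph_adj_iff_exists.mp hb₁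
  obtain ⟨-, v₂, hv₂b, hv₂⟩ := lineGraph_adj_iff_exists.mp hb₂
  obtain ⟨-, v₃, hv₃b, hv₃⟩ := lineGraph_adj_iff_exists.mp hb₃
  rcases Sym2.eq_or_eq_or_eq_of_mem hv₁b hv₂b hv₃b with rfl | rfl | rfl
  · exact .inl (lineGraph_adj_of_mem_of_mem h₁₂ hv₁ hv₂)
  · exact .inr (.inl (lineGraph_adj_of_mem_of_mem h₁₃ hv₁ hv₃))
  · exact .inr (.inr (lineGraph_adj_of_mem_of_mem h₂₃ hv₂ hv₃))

-- Mod 2, the edge `s(i, j)` itself is counted twice and every other edge meeting it once.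
theorem ite_mem_add_ite_mem_eq_ite_lineGraph_adj [DecidableEq V] {i j : V} (h : G.Adj i j)
    (e : G.edgeSet) [Decidable (G.lineGraph.Adj ⟨s(i, j), h⟩ e)] :
    ((if i ∈ (e : Sym2 V) then 1 else 0) + (if j ∈ (e : Sym2 V) then 1 else 0) : ZMod 2) =
      if G.lineGraph.Adj ⟨s(i, j), h⟩ e then 1 else 0 := by
  by_cases he : e = ⟨s(i, j), h⟩
  · subst he
    simp only [Sym2.mem_mk_left, Sym2.mem_mk_right, if_true, G.lineGraph.irrefl, if_false]
    decide
  · have hnot_both : ¬ (i ∈ (e : Sym2 V) ∧ j ∈ (e : Sym2 V)) := by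
      rw [Sym2.mem_and_mem_iff h.ne]
      exact fun h' => he (Subtype.ext h')
    have hadj : G.lineGraph.Adj ⟨s(i, j), h⟩ e ↔ i ∈ (e : Sym2 V) ∨ j ∈ (e : Sym2 V) := by
      simp [lineGraph_adj_iff_exists, Ne.symm he]
    by_cases hi : i ∈ (e : Sym2 V) <;> by_cases hj : j ∈ (e : Sym2 V) <;> simp_all

section Parity

variable [Fintype G.edgeSet] [DecidableEq V] [DecidableEq α]

def incidentColorParity (c : G.edgeSet → α) (v : V) (a : α) : ZMod 2 :=
  ∑ e : G.edgeSet, if v ∈ (e : Sym2 V) ∧ c e = a then 1 else 0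

theorem incidentColorParity_add_of_isCFONColoring {c : G.edgeSet → α}
    (hc : G.lineGraph.IsCFONColoring c) {i j : V} (h : G.Adj i j) :
    ∃ a, incidentColorParity c i a + incidentColorParity c j a = 1 := by
  classical
  obtain ⟨a, ha⟩ := hc ⟨s(i, j), h⟩
  refine ⟨a, ?_⟩
  calc incidentColorParity c i a + incidentColorParity c j a
      = ∑ e : G.edgeSet, if G.lineGraph.Adj ⟨s(i, j), h⟩ e ∧ c e = a then 1 else 0 := by
        rw [incidentColorParity, incidentColorParity, ← Finset.sum_add_distrib]
        refine Finset.sum_congr rfl fun e _ => ?_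
        by_cases hce : c e = a
        · simpa [hce] using ite_mem_add_ite_mem_eq_ite_lineGraph_adj h e
        · simp [hce]
    _ = 1 := by
        rw [Finset.sum_boole, Finset.card_eq_one.mpr]
        · simp
        obtain ⟨u, hu, hu_unique⟩ := ha
        exact ⟨u, Finset.eq_singleton_iff_unique_mem.mpr ⟨by simpa using hu, by simpa using hu_unique⟩⟩

end Parity

theorem IsCFONColoring.colorable_of_lineGraph [Fintype G.edgeSet] [Fintype α]
    {c : G.edgeSet → α} (hc : G.lineGraph.IsCFONColoring c) :
    G.Colorable (2 ^ Fintype.card α) := by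
  classical
  let C : G.Coloring (α → ZMod 2) := Coloring.mk (incidentColorParity c) fun h hparity => by
    obtain ⟨a, ha⟩ := incidentColorParity_add_of_isCFONColoring hc h
    rw [hparity, CharTwo.add_self_eq_zero] at ha
    exact zero_ne_one ha
  simpa using C.colorable

theorem card_le_two_pow_of_isCFONColoring_lineGraph_top [Fintype V] [DecidableEq V] [Fintype α]
    {c : (⊤ : SimpleGraph V).edgeSet → α} (hc : (⊤ : SimpleGraph V).lineGraph.IsCFONColoring c) :
    Fintype.card V ≤ 2 ^ Fintype.card α := by
  simpa using hc.colorable_of_lineGraph.card_le_of_pairwise_adj id fun _ _ h => h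

theorem lineGraph_top_exists_adj (hV : 3 ≤ ENat.card V) (e : (⊤ : SimpleGraph V).edgeSet) :
    ∃ e', (⊤ : SimpleGraph V).lineGraph.Adj e e' := by
  obtain ⟨z, hz⟩ := e
  induction z using Sym2.ind with
  | h i j =>
    obtain ⟨r, hri, hrj⟩ := ENat.exists_ne_ne_of_three_le hV i j
    refine ⟨⟨s(i, r), by simpa using hri.symm⟩,
      lineGraph_adj_of_mem_of_mem ?_ (Sym2.mem_mk_left i j) (Sym2.mem_mk_left i r)⟩
    rw [ne_eq, Subtype.mk.injEq, Sym2.congr_right]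
    exact hrj.symm

end SimpleGraph

theorem one_add_sqrt_one_add_eight_mul_choose_two_div_two {m : ℕ} (hm : 1 ≤ m) :
    (1 + √(1 + 8 * (m.choose 2 : ℝ))) / 2 = m := by
  have hsq : 1 + 8 * (m.choose 2 : ℝ) = (2 * m - 1) ^ 2 := by
    rw [Nat.cast_choose_two]
    ring
  have hm' : (1 : ℝ) ≤ m := by exact_mod_cast hm
  rw [hsq, Real.sqrt_sq (by linarith)]
  ring

open SimpleGraph in
theorem clawfree_cfon_lower_bound_general (N : ℕ) :
    ∃ (n : ℕ) (G : SimpleGraph (Fin n)),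
      N ≤ n ∧
      (¬ ∃ (b : Fin n) (S : Finset (Fin n)), S.card = 3 ∧ b ∉ S ∧
        (∀ a ∈ S, G.Adj b a) ∧ (∀ a ∈ S, ∀ a' ∈ S, a ≠ a' → ¬ G.Adj a a')) ∧
      (∀ v : Fin n, ∃ u, G.Adj v u) ∧
      (∀ (k : ℕ) (c : Fin n → Fin k),
        (∀ v : Fin n, ∃ a : Fin k, ∃! u : Fin n, G.Adj v u ∧ c u = a) →
        Real.logb 2 ((1 + Real.sqrt (1 + 8 * n)) / 2) ≤ k) := by
  set m := N + 3
  have hcard : Fintype.card (⊤ : SimpleGraph (Fin m)).edgeSet = m.choose 2 := by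
    rw [card_edgeSet, card_edgeFinset_top_eq_card_choose_two, Fintype.card_fin]
  let e := (⊤ : SimpleGraph (Fin m)).lineGraph.overFinIso hcard
  refine ⟨m.choose 2, _, ?_, e.isClawFree lineGraph_isClawFree, fun v => ?_, fun k c hc => ?_⟩
  · rw [Nat.choose_two_right]
    exact (Nat.le_div_iff_mul_le two_pos).mpr (show N * 2 ≤ (N + 3) * (N + 2) by nlinarith)
  · obtain ⟨u, hu⟩ := lineGraph_top_exists_adj (by simp [m]) (e.symm v)
    exact ⟨e u, by simpa using e.map_adj_iff.mpr hu⟩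
  · have hm : m ≤ 2 ^ k := by
      simpa using card_le_two_pow_of_isCFONColoring_lineGraph_top (IsCFONColoring.comp_iso hc e)
    rw [one_add_sqrt_one_add_eight_mul_choose_two_div_two (by omega),
      Real.logb_le_iff_le_rpow one_lt_two (by positivity), Real.rpow_natCast]
    exact_mod_cast hm

/-- There exist claw-free graphs on arbitrarily many vertices, without isolated
vertices, whose CFON chromatic number is at least `log₂ ((1 + √(1 + 8n))/2)`,
i.e. `Ω(log n)`. -/
theorem clawfree_cfon_lower_bound (N : ℕ) (hN : 0 < N) :
    ∃ (n : ℕ) (G : SimpleGraph (Fin n)),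
      N ≤ n ∧
      (¬ ∃ (b : Fin n) (S : Finset (Fin n)), S.card = 3 ∧ b ∉ S ∧
        (∀ a ∈ S, G.Adj b a) ∧ (∀ a ∈ S, ∀ a' ∈ S, a ≠ a' → ¬ G.Adj a a')) ∧
      (∀ v : Fin n, ∃ u, G.Adj v u) ∧
      (∀ (k : ℕ) (c : Fin n → Fin k),
        (∀ v : Fin n, ∃ a : Fin k, ∃! u : Fin n, G.Adj v u ∧ c u = a) →
        Real.logb 2 ((1 + Real.sqrt (1 + 8 * n)) / 2) ≤ k) :=
  clawfree_cfon_lower_bound_general N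
end

section
/- If c is a CFON coloring of a graph G with k colors, then c yields a closed-neighborhood conflict-free (CFCN) coloring of G with at most 2k colors. Consequently, χ_CN(G) ≤ 2·χ_ON(G) for every graph G with no isolated vertices. -/
/-- Any CFON coloring of a graph `G` without isolated vertices with `k` colors yields
a CFCN (closed-neighborhood conflict-free) coloring with at most `2k` colors; hence
`χ_CN(G) ≤ 2 χ_ON(G)`. -/
theorem cfcn_le_two_mul_cfon {V : Type*} (G : SimpleGraph V)
    (hiso : ∀ v : V, ∃ u, G.Adj v u)
    (k : ℕ) (c : V → Fin k)
    (hCF : ∀ v : V, ∃ a : Fin k, ∃! u : V, G.Adj v u ∧ c u = a) :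
    ∃ c' : V → Fin (2 * k),
      ∀ v : V, ∃ a : Fin (2 * k), ∃! u : V, (u = v ∨ G.Adj v u) ∧ c' u = a := by
  classical
  have hCF' : ∀ v : V, ∃ a u, (G.Adj v u ∧ c u = a) ∧
      ∀ w, G.Adj v w ∧ c w = a → w = u := by
    intro v
    obtain ⟨a, u, hu, h⟩ := hCF v
    exact ⟨a, u, hu, h⟩
  choose av uv hmain huniq using hCF'
  have hadj : ∀ v, G.Adj v (uv v) := fun v => (hmain v).1
  have hcol : ∀ v, c (uv v) = av v := fun v => (hmain v).2
  -- a bit distinguishing a "constrained" vertex (one whose own color is its unique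
  -- open-neighborhood color) from its unique witness neighbor
  set b : V → Fin 2 := fun v =>
    if c v = av v then
      (if c (uv v) = av (uv v) ∧ WellOrderingRel (uv v) v then 0 else 1)
    else 0 with hb
  have key : ∀ v, c v = av v → b v ≠ b (uv v) := by
    intro v hv
    have hne : uv v ≠ v := fun h => G.irrefl (h ▸ hadj v)
    by_cases hu : c (uv v) = av (uv v)
    · have hback : uv (uv v) = v := by
        refine (huniq (uv v) v ?_).symm
        refine ⟨(hadj v).symm, ?_⟩
        rw [hv, ← hcol v, hu]
      rcases trichotomous (r := WellOrderingRel) (uv v) v with hlt | heq | hgt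
      · have hb1 : b v = 0 := by simp [hb, hv, hu, hlt]
        have hb2 : b (uv v) = 1 := by
          have : ¬ WellOrderingRel (uv (uv v)) (uv v) := by
            rw [hback]; exact asymm hlt
          simp [hb, hu, this]
        rw [hb1, hb2]; decide
      · exact absurd heq hne
      · have hb1 : b v = 1 := by
          have : ¬ WellOrderingRel (uv v) v := asymm hgt
          simp [hb, hv, this]
        have hb2 : b (uv v) = 0 := by
          have h1 : c (uv (uv v)) = av (uv (uv v)) := by rw [hback]; exact hv
          have h2 : WellOrderingRel (uv (uv v)) (uv v) := by rw [hback]; exact hgt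
          simp [hb, hu, h1, h2]
        rw [hb1, hb2]; decide
    · have hb1 : b v = 1 := by simp [hb, hv, hu]
      have hb2 : b (uv v) = 0 := by simp [hb, hu]
      rw [hb1, hb2]; decide
  refine ⟨fun v => finProdFinEquiv (b v, c v), fun v => ?_⟩
  refine ⟨finProdFinEquiv (b (uv v), av v), uv v, ⟨Or.inr (hadj v), by simp only []; rw [hcol]⟩, ?_⟩
  rintro w ⟨hw, hcw⟩
  have hpair : b w = b (uv v) ∧ c w = av v := by
    have := finProdFinEquiv.injective hcw
    exact ⟨congrArg Prod.fst this, congrArg Prod.snd this⟩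
  rcases hw with rfl | hadjw
  · exact absurd hpair.1 (key w hpair.2)
  · exact huniq v w ⟨hadjw, hpair.2⟩
end

section
/- Let H be a hypergraph with vertex set V and hyperedge multiset E given by an injective-indexed family (e_a)_{a ∈ A}, and suppose each vertex lies in at most d hyperedges. Color V greedily: this can be done so that each hyperedge contains a vertex whose color is unique within that hyperedge, using at most d + 1 colors. As a corollary, if G is a graph and A is an independent set such that every vertex outside A has at most d neighbors in A, then V(G) \ A can be colored with d + 1 colors so that every vertex of A (with at least one neighbor) sees some color exactly once among its neighbors. -/
/-!
Induction on `d`. Choose a set `T` of vertices, maximal among those meeting every hyperedge in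
at most one vertex, and give `T` a fresh color; a hyperedge meeting `T` is then conflict-free
through its unique vertex in `T`. By maximality every vertex on a hyperedge also lies on a
hyperedge meeting `T`, so the hyperedges disjoint from `T` have maximum degree one less and are
colored by induction. The graph statement is the hypergraph one for the neighborhoods of the
non-isolated vertices of `A`, which lie outside `A` by independence.
-/

open Finset

namespace Hypergraph

variable {ι V α : Type*}

def IsConflictFreeOn (s : Finset ι) (e : ι → Finset V) (c : V → α) : Prop :=
  ∀ i ∈ s, ∃ x ∈ e i, ∀ y ∈ e i, y ≠ x → c y ≠ c x

variable [DecidableEq V] {s : Finset ι} {e : ι → Finset V}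

def IsSparseOn (s : Finset ι) (e : ι → Finset V) (T : Finset V) : Prop :=
  ∀ i ∈ s, #(e i ∩ T) ≤ 1

lemma IsSparseOn.insert {T : Finset V} {v : V} (hT : IsSparseOn s e T)
    (hv : ∀ i ∈ s, v ∈ e i → Disjoint (e i) T) : IsSparseOn s e (insert v T) := by
  intro i hi
  by_cases hvi : v ∈ e i
  · rw [inter_insert_of_mem hvi, disjoint_iff_inter_eq_empty.mp (hv i hi hvi)]
    simp
  · rw [inter_insert_of_notMem hvi]
    exact hT i hi

lemma exists_isSparseOn_forall_exists_not_disjoint [Fintype V] (s : Finset ι)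
    (e : ι → Finset V) :
    ∃ T, IsSparseOn s e T ∧
      ∀ i ∈ s, ∀ v ∈ e i, ∃ j ∈ s, v ∈ e j ∧ ¬Disjoint (e j) T := by
  classical
  obtain ⟨T, hTmem, hTmax⟩ := exists_max_image {T : Finset V | IsSparseOn s e T} card
    ⟨∅, mem_filter.mpr ⟨mem_univ _, fun i _ => by simp⟩⟩
  have hT : IsSparseOn s e T := (mem_filter.mp hTmem).2
  refine ⟨T, hT, fun i hi v hvi => ?_⟩
  by_cases hvT : v ∈ T
  · exact ⟨i, hi, hvi, not_disjoint_iff.mpr ⟨v, hvi, hvT⟩⟩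
  by_contra! h
  have := hTmax _ (mem_filter.mpr ⟨mem_univ _, hT.insert h⟩)
  rw [card_insert_of_notMem hvT] at this
  omega

lemma card_filter_disjoint_le {T : Finset V}
    (hT : ∀ i ∈ s, ∀ v ∈ e i, ∃ j ∈ s, v ∈ e j ∧ ¬Disjoint (e j) T) (v : V) :
    #{i ∈ {i ∈ s | Disjoint (e i) T} | v ∈ e i} ≤ #{i ∈ s | v ∈ e i} - 1 := by
  have hsub : {i ∈ {i ∈ s | Disjoint (e i) T} | v ∈ e i} ⊆ {i ∈ s | v ∈ e i} :=
    filter_subset_filter _ (filter_subset _ _)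
  obtain h | ⟨i, hi⟩ := ({i ∈ s | v ∈ e i}).eq_empty_or_nonempty
  · rw [h, subset_empty] at hsub
    simp [hsub, h]
  · obtain ⟨hi, hvi⟩ := mem_filter.mp hi
    obtain ⟨j, hj, hvj, hjT⟩ := hT i hi v hvi
    refine Nat.le_sub_one_of_lt (card_lt_card (ssubset_of_subset_of_ne hsub fun heq => ?_))
    have : j ∈ {i ∈ {i ∈ s | Disjoint (e i) T} | v ∈ e i} :=
      heq ▸ mem_filter.mpr ⟨hj, hvj⟩
    exact hjT (mem_filter.mp (mem_filter.mp this).1).2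

lemma IsConflictFreeOn.extend {T : Finset V} {d : ℕ} {c : V → Fin (d + 1)}
    (hT : IsSparseOn s e T) (hc : IsConflictFreeOn {i ∈ s | Disjoint (e i) T} e c) :
    IsConflictFreeOn s e fun v => if v ∈ T then Fin.last (d + 1) else (c v).castSucc := by
  intro i hi
  by_cases hiT : Disjoint (e i) T
  · obtain ⟨x, hx, hxu⟩ := hc i (mem_filter.mpr ⟨hi, hiT⟩)
    refine ⟨x, hx, fun y hy hyx => ?_⟩
    dsimp only
    rw [if_neg (disjoint_left.mp hiT hx), if_neg (disjoint_left.mp hiT hy)]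
    exact fun h => hxu y hy hyx (Fin.castSucc_injective _ h)
  · obtain ⟨x, hx, hxT⟩ := not_disjoint_iff.mp hiT
    refine ⟨x, hx, fun y hy hyx => ?_⟩
    have hyT : y ∉ T := fun hyT => hyx <|
      card_le_one.mp (hT i hi) y (mem_inter.mpr ⟨hy, hyT⟩) x (mem_inter.mpr ⟨hx, hxT⟩)
    dsimp only
    rw [if_neg hyT, if_pos hxT]
    exact (Fin.castSucc_lt_last _).ne

theorem exists_isConflictFreeOn [Fintype V] (d : ℕ) (s : Finset ι) (e : ι → Finset V)
    (hne : ∀ i ∈ s, (e i).Nonempty) (hdeg : ∀ v, #{i ∈ s | v ∈ e i} ≤ d) :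
    ∃ c : V → Fin (d + 1), IsConflictFreeOn s e c := by
  induction d generalizing s with
  | zero =>
    refine ⟨0, fun i hi => ?_⟩
    obtain ⟨v, hv⟩ := hne i hi
    have : 0 < #{i ∈ s | v ∈ e i} := card_pos.mpr ⟨i, mem_filter.mpr ⟨hi, hv⟩⟩
    exact absurd (hdeg v) (by omega)
  | succ d ih =>
    obtain ⟨T, hT, hTmax⟩ := exists_isSparseOn_forall_exists_not_disjoint s e
    obtain ⟨c, hc⟩ := ih {i ∈ s | Disjoint (e i) T} (fun i hi => hne i (mem_filter.mp hi).1)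
      fun v => (card_filter_disjoint_le hTmax v).trans (by have := hdeg v; omega)
    exact ⟨_, hc.extend hT⟩

end Hypergraph

namespace SimpleGraph

variable {V : Type*} [Fintype V] [DecidableEq V] {G : SimpleGraph V} [DecidableRel G.Adj]
  {A : Finset V}

lemma card_filter_mem_neighborFinset_le (hA : ∀ a ∈ A, ∀ a' ∈ A, ¬G.Adj a a') {d : ℕ}
    (hdeg : ∀ b ∉ A, #(G.neighborFinset b ∩ A) ≤ d) (v : V) :
    #{a ∈ A | v ∈ G.neighborFinset a} ≤ d := by
  by_cases hv : v ∈ A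
  · rw [filter_false_of_mem fun a ha hva => hA a ha v hv ((G.mem_neighborFinset a v).mp hva)]
    simp
  · refine (card_le_card fun a ha => ?_).trans (hdeg v hv)
    obtain ⟨ha, hva⟩ := mem_filter.mp ha
    rw [G.mem_neighborFinset] at hva
    exact mem_inter.mpr ⟨(G.mem_neighborFinset v a).mpr hva.symm, ha⟩

end SimpleGraph

/-- (1) A hypergraph given by an injective family of nonempty hyperedges in which
every vertex lies in at most `d` hyperedges has a conflict-free coloring with `d + 1`
colors. (2) Consequently, if `A` is an independent set in a graph `G` and every vertex
outside `A` has at most `d` neighbors in `A`, then `V(G) \ A` can be colored with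
`d + 1` colors so that every vertex of `A` with at least one neighbor sees some color
exactly once among its neighbors. -/
theorem greedy_cf_and_independent_corollary :
    (∀ (V A : Type) [Fintype V] [DecidableEq V] [Fintype A] (d : ℕ)
        (e : A → Finset V), Function.Injective e → (∀ a, (e a).Nonempty) →
        (∀ v : V, (Finset.univ.filter (fun a : A => v ∈ e a)).card ≤ d) →
        ∃ c : V → Fin (d + 1),
          ∀ a : A, ∃ x ∈ e a, ∀ y ∈ e a, y ≠ x → c y ≠ c x) ∧
    (∀ (V : Type) [Fintype V] [DecidableEq V] (G : SimpleGraph V)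
        [DecidableRel G.Adj] (d : ℕ) (A : Finset V),
        (∀ a ∈ A, ∀ a' ∈ A, ¬ G.Adj a a') →
        (∀ b : V, b ∉ A → (G.neighborFinset b ∩ A).card ≤ d) →
        ∃ c : V → Fin (d + 1),
          ∀ a ∈ A, 0 < G.degree a →
            ∃ col : Fin (d + 1), ∃! b : V, b ∉ A ∧ G.Adj a b ∧ c b = col) := by
  refine ⟨fun V A _ _ _ d e _ hne hdeg => ?_, fun V _ _ G _ d A hA hdeg => ?_⟩
  · obtain ⟨c, hc⟩ := Hypergraph.exists_isConflictFreeOn d univ e (fun a _ => hne a) hdeg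
    exact ⟨c, fun a => hc a (mem_univ a)⟩
  · obtain ⟨c, hc⟩ := Hypergraph.exists_isConflictFreeOn d {a ∈ A | 0 < G.degree a}
      (G.neighborFinset ·)
      (fun a ha => card_pos.mp <| G.card_neighborFinset_eq_degree a ▸ (mem_filter.mp ha).2)
      fun v => (card_le_card (filter_subset_filter _ (filter_subset _ _))).trans
        (G.card_filter_mem_neighborFinset_le hA hdeg v)
    refine ⟨c, fun a ha hdega => ?_⟩
    obtain ⟨x, hx, hxu⟩ := hc a (mem_filter.mpr ⟨ha, hdega⟩)
    rw [G.mem_neighborFinset] at hx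
    refine ⟨c x, x, ⟨fun hxA => hA a ha x hxA hx, hx, rfl⟩, fun y ⟨_, hy, hcy⟩ => ?_⟩
    by_contra hyx
    exact hxu y ((G.mem_neighborFinset a y).mpr hy) hyx hcy
end
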